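/- arXiv:1301.3262 — 2 statements merged into one kernel-verified Lean document; each statement's English description precedes it below -/
import Mathlib

section
/- Let p>1 and 0<L<p. Let (λ_n)_{n≥1} be a positive real sequence with Λ_n = Σ_{k=1}^n λ_k. Suppose that for every integer n≥1 one has Σ_{k=1}^n (λ_k/Λ_n) · Π_{i=k}^n ( (Λ_{i+1}/λ_{i+1} − L/p) / (Λ_i/λ_i) )^{1/(p−1)} ≤ p/(p−L). Then for every nonnegative real sequence (x_n)_{n≥1} with Σ_{n=1}^∞ x_n^p < ∞, one has Σ_{n=1}^∞ ( (1/Λ_n) Σ_{k=1}^n λ_k x_k )^p ≤ (p/(p−L))^p Σ_{n=1}^∞ x_n^p. -/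
/-! Let `r i` be the factor under the product in the hypothesis and `C = p / (p - L)`. The
hypothesis says that the test weights `w n k = ∏_{i=k}^n (r i)^(1/(p-1))` have row sums
`∑_k (λ_k/Λ_n) w n k ≤ C`, so Hölder's inequality against them (a Schur test) bounds the `p`-th
power of the `n`-th mean by `C^(p-1) ∑_k (λ_k/Λ_n) (w n k)^(1-p) x_k^p`. Since
`(w n k)^(1-p) = ∏_{i=k}^n (r i)⁻¹` and, using `Λ_{m+1} = Λ_m + λ_{m+1}` and `C (1 - L/p) = 1`,
`(r m)⁻¹ / Λ_m = C (1/λ_m - (r m)⁻¹/λ_{m+1})`, the column sums telescope and are at most `C`. -/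

open Finset Real

theorem rpow_inner_le_weight_mul_Lp_of_nonneg {ι : Type*} (s : Finset ι) {p : ℝ} (hp : 1 ≤ p)
    {b y : ι → ℝ} (hb : ∀ i ∈ s, 0 ≤ b i) (hy : ∀ i ∈ s, 0 ≤ y i) :
    (∑ i ∈ s, b i * y i) ^ p ≤ (∑ i ∈ s, b i) ^ (p - 1) * ∑ i ∈ s, b i * y i ^ p := by
  have hp0 : 0 < p := by linarith
  -- passing to `s.attach` makes the nonnegativity hypotheses global, as the library lemma wants
  have holder := inner_le_weight_mul_Lp_of_nonneg s.attach hp (fun i => b i) (fun i => y i)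
    (fun i => hb i i.2) (fun i => hy i i.2)
  simp only [sum_attach s (fun i => b i * y i), sum_attach s b,
    sum_attach s (fun i => b i * y i ^ p)] at holder
  have hB : 0 ≤ ∑ i ∈ s, b i := sum_nonneg hb
  have hBy : 0 ≤ ∑ i ∈ s, b i * y i ^ p :=
    sum_nonneg fun i hi => mul_nonneg (hb i hi) (rpow_nonneg (hy i hi) p)
  calc (∑ i ∈ s, b i * y i) ^ p
      ≤ ((∑ i ∈ s, b i) ^ (1 - p⁻¹) * (∑ i ∈ s, b i * y i ^ p) ^ p⁻¹) ^ p :=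
        rpow_le_rpow (sum_nonneg fun i hi => mul_nonneg (hb i hi) (hy i hi)) holder hp0.le
    _ = (∑ i ∈ s, b i) ^ (p - 1) * ∑ i ∈ s, b i * y i ^ p := by
        rw [mul_rpow (rpow_nonneg hB _) (rpow_nonneg hBy _), ← rpow_mul hB, ← rpow_mul hBy,
          inv_mul_cancel₀ hp0.ne', rpow_one, sub_mul, one_mul, inv_mul_cancel₀ hp0.ne']

theorem rpow_sum_mul_le_of_weight {ι : Type*} (s : Finset ι) {p : ℝ} (hp : 1 ≤ p)
    {a w x : ι → ℝ} (ha : ∀ i ∈ s, 0 ≤ a i) (hw : ∀ i ∈ s, 0 < w i) (hx : ∀ i ∈ s, 0 ≤ x i) :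
    (∑ i ∈ s, a i * x i) ^ p
      ≤ (∑ i ∈ s, a i * w i) ^ (p - 1) * ∑ i ∈ s, a i * w i ^ (1 - p) * x i ^ p := by
  have key := rpow_inner_le_weight_mul_Lp_of_nonneg s hp (b := fun i => a i * w i)
    (y := fun i => x i / w i) (fun i hi => mul_nonneg (ha i hi) (hw i hi).le)
    (fun i hi => div_nonneg (hx i hi) (hw i hi).le)
  convert key using 2
  · refine sum_congr rfl fun i hi => ?_
    field_simp [(hw i hi).ne']
  · refine sum_congr rfl fun i hi => ?_
    rw [div_rpow (hx i hi) (hw i hi).le, rpow_sub (hw i hi), rpow_one]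
    field_simp [(rpow_pos_of_pos (hw i hi) p).ne']

theorem sum_Icc_rpow_le_of_schur_test {p α β : ℝ} (hp : 1 ≤ p) {a w : ℕ → ℕ → ℝ} {x : ℕ → ℝ}
    (ha : ∀ n, ∀ k ∈ Icc 1 n, 0 ≤ a n k) (hw : ∀ n, ∀ k ∈ Icc 1 n, 0 < w n k)
    (hx : ∀ k, 1 ≤ k → 0 ≤ x k)
    (hrow : ∀ n, 1 ≤ n → ∑ k ∈ Icc 1 n, a n k * w n k ≤ α)
    (hcol : ∀ k N, 1 ≤ k → k ≤ N → ∑ n ∈ Icc k N, a n k * w n k ^ (1 - p) ≤ β) (N : ℕ) :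
    ∑ n ∈ Icc 1 N, (∑ k ∈ Icc 1 n, a n k * x k) ^ p
      ≤ α ^ (p - 1) * β * ∑ k ∈ Icc 1 N, x k ^ p := by
  have hα : 0 ≤ α :=
    (sum_nonneg fun k hk => mul_nonneg (ha 1 k hk) (hw 1 k hk).le).trans (hrow 1 le_rfl)
  have hrow' : ∀ n ∈ Icc 1 N, (∑ k ∈ Icc 1 n, a n k * x k) ^ p
      ≤ α ^ (p - 1) * ∑ k ∈ Icc 1 n, a n k * w n k ^ (1 - p) * x k ^ p := by
    intro n hn
    have hxn : ∀ k ∈ Icc 1 n, 0 ≤ x k := fun k hk => hx k (mem_Icc.mp hk).1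
    refine (rpow_sum_mul_le_of_weight _ hp (ha n) (hw n) hxn).trans ?_
    gcongr
    · exact sum_nonneg fun k hk => mul_nonneg (mul_nonneg (ha n k hk)
        (rpow_nonneg (hw n k hk).le _)) (rpow_nonneg (hxn k hk) _)
    · exact sum_nonneg fun k hk => mul_nonneg (ha n k hk) (hw n k hk).le
    · exact hrow n (mem_Icc.mp hn).1
  calc ∑ n ∈ Icc 1 N, (∑ k ∈ Icc 1 n, a n k * x k) ^ p
      ≤ ∑ n ∈ Icc 1 N, α ^ (p - 1) * ∑ k ∈ Icc 1 n, a n k * w n k ^ (1 - p) * x k ^ p :=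
        sum_le_sum hrow'
    _ = α ^ (p - 1) * ∑ k ∈ Icc 1 N, (∑ n ∈ Icc k N, a n k * w n k ^ (1 - p)) * x k ^ p := by
        rw [← mul_sum]
        simp only [sum_mul]
        congr 1
        exact sum_comm' fun n k => by simp only [mem_Icc]; omega
    _ ≤ α ^ (p - 1) * ∑ k ∈ Icc 1 N, β * x k ^ p := by
        gcongr with k hk
        · exact rpow_nonneg (hx k (mem_Icc.mp hk).1) p
        · exact hcol k N (mem_Icc.mp hk).1 (mem_Icc.mp hk).2
    _ = α ^ (p - 1) * β * ∑ k ∈ Icc 1 N, x k ^ p := by rw [← mul_sum, mul_assoc]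

theorem prod_rpow_one_div_sub_one_rpow_one_sub {ι : Type*} (s : Finset ι) {p : ℝ} (hp : p ≠ 1)
    {r : ι → ℝ} (hr : ∀ i ∈ s, 0 ≤ r i) :
    (∏ i ∈ s, r i ^ (1 / (p - 1))) ^ (1 - p) = ∏ i ∈ s, (r i)⁻¹ := by
  have hexp : 1 / (p - 1) * (1 - p) = -1 := by
    field_simp [sub_ne_zero.mpr hp]
    ring
  rw [finsetProd_rpow s r hr, ← rpow_mul (prod_nonneg hr), hexp, rpow_neg_one, prod_inv_distrib]

theorem sum_Icc_prod_mul_eq_sub {R : Type*} [CommRing R] {g u v : ℕ → R} {k N : ℕ} (hkN : k ≤ N)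
    (h : ∀ m, k ≤ m → g m * v m = u m - g m * u (m + 1)) :
    ∑ n ∈ Icc k N, (∏ i ∈ Icc k n, g i) * v n = u k - (∏ i ∈ Icc k N, g i) * u (N + 1) := by
  induction N, hkN using Nat.le_induction with
  | base => simpa using h k le_rfl
  | succ N hkN ih =>
    rw [sum_Icc_succ_top (by omega), ih, prod_Icc_succ_top (by omega)]
    linear_combination (∏ i ∈ Icc k N, g i) * h (N + 1) (by omega)

theorem sum_range_succ_eq_sum_Icc {M : Type*} [AddCommMonoid M] (f : ℕ → M) (N : ℕ) :
    ∑ n ∈ range N, f (n + 1) = ∑ n ∈ Icc 1 N, f n := by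
  rw [range_eq_Ico, sum_Ico_add', zero_add, Ico_add_one_right_eq_Icc]

theorem tsum_ofReal_le_ofReal_mul_tsum_ofReal {f g : ℕ → ℝ} {c : ℝ} (hc : 0 ≤ c)
    (hf : ∀ n, 0 ≤ f n) (hg : ∀ n, 0 ≤ g n)
    (h : ∀ N, ∑ n ∈ range N, f n ≤ c * ∑ n ∈ range N, g n) :
    ∑' n, ENNReal.ofReal (f n) ≤ ENNReal.ofReal c * ∑' n, ENNReal.ofReal (g n) := by
  rw [ENNReal.tsum_eq_iSup_nat]
  refine iSup_le fun N => ?_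
  calc ∑ n ∈ range N, ENNReal.ofReal (f n)
      = ENNReal.ofReal (∑ n ∈ range N, f n) := (ENNReal.ofReal_sum_of_nonneg fun n _ => hf n).symm
    _ ≤ ENNReal.ofReal (c * ∑ n ∈ range N, g n) := ENNReal.ofReal_le_ofReal (h N)
    _ = ENNReal.ofReal c * ∑ n ∈ range N, ENNReal.ofReal (g n) := by
        rw [ENNReal.ofReal_mul hc, ENNReal.ofReal_sum_of_nonneg fun n _ => hg n]
    _ ≤ ENNReal.ofReal c * ∑' n, ENNReal.ofReal (g n) := by gcongr; exact ENNReal.sum_le_tsum _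

noncomputable def hardyFactor (p L : ℝ) (l Λ : ℕ → ℝ) (i : ℕ) : ℝ :=
  (Λ (i + 1) / l (i + 1) - L / p) / (Λ i / l i)

section WeightedMean

variable {p L : ℝ} {l Λ : ℕ → ℝ}

theorem partialSum_pos (hl : ∀ n, 1 ≤ n → 0 < l n) (hΛ : ∀ n, Λ n = ∑ k ∈ Icc 1 n, l k)
    {n : ℕ} (hn : 1 ≤ n) : 0 < Λ n := by
  rw [hΛ]
  exact sum_pos (fun k hk => hl k (mem_Icc.mp hk).1) ⟨1, mem_Icc.mpr ⟨le_rfl, hn⟩⟩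

theorem partialSum_succ (hΛ : ∀ n, Λ n = ∑ k ∈ Icc 1 n, l k) (n : ℕ) :
    Λ (n + 1) = Λ n + l (n + 1) := by
  rw [hΛ, hΛ, sum_Icc_succ_top (Nat.le_add_left 1 n)]

variable (hl : ∀ n, 1 ≤ n → 0 < l n) (hΛ : ∀ n, Λ n = ∑ k ∈ Icc 1 n, l k)
include hl hΛ

theorem hardyFactor_pos (hp : 0 < p) (hLp : L < p) {i : ℕ} (hi : 1 ≤ i) :
    0 < hardyFactor p L l Λ i := by
  have hl' := hl (i + 1) (by omega)
  have hΛ' := partialSum_pos hl hΛ hi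
  have h1 : 1 < Λ (i + 1) / l (i + 1) := by
    rw [lt_div_iff₀ hl', partialSum_succ hΛ]
    linarith
  have h2 : L / p < 1 := (div_lt_one hp).2 hLp
  exact div_pos (by linarith) (div_pos hΛ' (hl i hi))

theorem inv_hardyFactor_mul_inv_eq (hp : 0 < p) (hLp : L < p) {m : ℕ} (hm : 1 ≤ m) :
    (hardyFactor p L l Λ m)⁻¹ * (Λ m)⁻¹
      = p / (p - L) * (l m)⁻¹ - (hardyFactor p L l Λ m)⁻¹ * (p / (p - L) * (l (m + 1))⁻¹) := by
  have hl' := hl (m + 1) (by omega)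
  have hΛ' := partialSum_pos hl hΛ hm
  have hlm := hl m hm
  have hpL : 0 < p - L := by linarith
  have hden : (Λ m + l (m + 1)) * p - l (m + 1) * L ≠ 0 := by nlinarith
  unfold hardyFactor
  rw [partialSum_succ hΛ]
  field_simp
  ring

theorem mul_sum_prod_inv_hardyFactor_le (hp : 0 < p) (hLp : L < p) {k N : ℕ} (hk : 1 ≤ k)
    (hkN : k ≤ N) :
    l k * ∑ n ∈ Icc k N, (∏ i ∈ Icc k n, (hardyFactor p L l Λ i)⁻¹) * (Λ n)⁻¹ ≤ p / (p - L) := by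
  have hprod : 0 < ∏ i ∈ Icc k N, (hardyFactor p L l Λ i)⁻¹ := prod_pos fun i hi =>
    inv_pos.mpr (hardyFactor_pos hl hΛ hp hLp (hk.trans (mem_Icc.mp hi).1))
  have hlk := hl k hk
  have hlN := hl (N + 1) (by omega)
  rw [sum_Icc_prod_mul_eq_sub (u := fun m => p / (p - L) * (l m)⁻¹) hkN
      fun m hm => inv_hardyFactor_mul_inv_eq hl hΛ hp hLp (hk.trans hm),
    mul_sub, mul_left_comm, mul_inv_cancel₀ hlk.ne', mul_one, sub_le_self_iff]
  positivity

theorem sum_rpow_weightedMean_le (hp : 1 < p) (hLp : L < p)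
    (hcond : ∀ n, 1 ≤ n →
      ∑ k ∈ Icc 1 n, (l k / Λ n) * ∏ i ∈ Icc k n, hardyFactor p L l Λ i ^ (1 / (p - 1))
      ≤ p / (p - L))
    {x : ℕ → ℝ} (hx : ∀ n, 1 ≤ n → 0 ≤ x n) (N : ℕ) :
    ∑ n ∈ Icc 1 N, ((1 / Λ n) * ∑ k ∈ Icc 1 n, l k * x k) ^ p
      ≤ (p / (p - L)) ^ p * ∑ n ∈ Icc 1 N, x n ^ p := by
  have hp0 : 0 < p := by linarith
  have hfactor : ∀ i, 1 ≤ i → 0 < hardyFactor p L l Λ i := fun i hi =>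
    hardyFactor_pos hl hΛ hp0 hLp hi
  have hcol : ∀ k N, 1 ≤ k → k ≤ N →
      ∑ n ∈ Icc k N, l k / Λ n * (∏ i ∈ Icc k n, hardyFactor p L l Λ i ^ (1 / (p - 1))) ^ (1 - p)
        ≤ p / (p - L) := by
    intro k N hk hkN
    calc ∑ n ∈ Icc k N, l k / Λ n * (∏ i ∈ Icc k n, hardyFactor p L l Λ i ^ (1 / (p - 1))) ^ (1 - p)
        = l k * ∑ n ∈ Icc k N, (∏ i ∈ Icc k n, (hardyFactor p L l Λ i)⁻¹) * (Λ n)⁻¹ := by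
          rw [mul_sum]
          refine sum_congr rfl fun n hn => ?_
          rw [prod_rpow_one_div_sub_one_rpow_one_sub _ hp.ne' fun i hi =>
            (hfactor i (hk.trans (mem_Icc.mp hi).1)).le]
          ring
      _ ≤ p / (p - L) := mul_sum_prod_inv_hardyFactor_le hl hΛ hp0 hLp hk hkN
  calc ∑ n ∈ Icc 1 N, ((1 / Λ n) * ∑ k ∈ Icc 1 n, l k * x k) ^ p
      = ∑ n ∈ Icc 1 N, (∑ k ∈ Icc 1 n, l k / Λ n * x k) ^ p := by
        refine sum_congr rfl fun n _ => ?_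
        rw [mul_sum]
        exact congrArg (· ^ p) (sum_congr rfl fun k _ => by ring)
    _ ≤ (p / (p - L)) ^ (p - 1) * (p / (p - L)) * ∑ n ∈ Icc 1 N, x n ^ p :=
        sum_Icc_rpow_le_of_schur_test hp.le
          (fun n k hk => (div_pos (hl k (mem_Icc.mp hk).1)
            (partialSum_pos hl hΛ ((mem_Icc.mp hk).1.trans (mem_Icc.mp hk).2))).le)
          (fun n k hk => prod_pos fun i hi =>
            rpow_pos_of_pos (hfactor i ((mem_Icc.mp hk).1.trans (mem_Icc.mp hi).1)) _)
          hx hcond hcol N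
    _ = (p / (p - L)) ^ p * ∑ n ∈ Icc 1 N, x n ^ p := by
        rw [← rpow_add_one (div_pos hp0 (by linarith)).ne', sub_add_cancel]

end WeightedMean

theorem stmt_11_general (p L : ℝ) (hp : 1 < p) (hLp : L < p)
    (l : ℕ → ℝ) (hl : ∀ n, 1 ≤ n → 0 < l n)
    (Λ : ℕ → ℝ) (hΛ : ∀ n, Λ n = ∑ k ∈ Finset.Icc 1 n, l k)
    (hcond : ∀ n, 1 ≤ n →
      ∑ k ∈ Finset.Icc 1 n, (l k / Λ n) *
        ∏ i ∈ Finset.Icc k n, ((Λ (i + 1) / l (i + 1) - L / p) / (Λ i / l i)) ^ (1 / (p - 1))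
      ≤ p / (p - L))
    (x : ℕ → ℝ) (hx : ∀ n, 1 ≤ n → 0 ≤ x n) :
    ∑' n : ℕ, ENNReal.ofReal (((1 / Λ (n + 1)) * ∑ k ∈ Finset.Icc 1 (n + 1), l k * x k) ^ p)
      ≤ ENNReal.ofReal ((p / (p - L)) ^ p) * ∑' n : ℕ, ENNReal.ofReal (x (n + 1) ^ p) := by
  have hmean : ∀ n, 0 ≤ (1 / Λ (n + 1)) * ∑ k ∈ Icc 1 (n + 1), l k * x k := fun n =>
    mul_nonneg (one_div_nonneg.mpr (partialSum_pos hl hΛ (Nat.le_add_left 1 n)).le)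
      (sum_nonneg fun k hk => mul_nonneg (hl k (mem_Icc.mp hk).1).le (hx k (mem_Icc.mp hk).1))
  refine tsum_ofReal_le_ofReal_mul_tsum_ofReal
    (rpow_nonneg (div_nonneg (by linarith) (by linarith)) _) (fun n => rpow_nonneg (hmean n) p)
    (fun n => rpow_nonneg (hx (n + 1) (Nat.le_add_left 1 n)) p) fun N => ?_
  rw [sum_range_succ_eq_sum_Icc (fun n => ((1 / Λ n) * ∑ k ∈ Icc 1 n, l k * x k) ^ p),
    sum_range_succ_eq_sum_Icc (fun n => x n ^ p)]
  exact sum_rpow_weightedMean_le hl hΛ hp hLp hcond hx N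

/-- Theorem 3.1 on l^p norms of weighted mean matrices. -/
theorem stmt_11 (p L : ℝ) (hp : 1 < p) (hL0 : 0 < L) (hLp : L < p)
    (l : ℕ → ℝ) (hl : ∀ n, 1 ≤ n → 0 < l n)
    (Λ : ℕ → ℝ) (hΛ : ∀ n, Λ n = ∑ k ∈ Finset.Icc 1 n, l k)
    (hcond : ∀ n, 1 ≤ n →
      ∑ k ∈ Finset.Icc 1 n, (l k / Λ n) *
        ∏ i ∈ Finset.Icc k n, ((Λ (i + 1) / l (i + 1) - L / p) / (Λ i / l i)) ^ (1 / (p - 1))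
      ≤ p / (p - L))
    (x : ℕ → ℝ) (hx : ∀ n, 1 ≤ n → 0 ≤ x n)
    (hxsum : Summable fun n : ℕ => x (n + 1) ^ p) :
    ∑' n : ℕ, ENNReal.ofReal (((1 / Λ (n + 1)) * ∑ k ∈ Finset.Icc 1 (n + 1), l k * x k) ^ p)
      ≤ ENNReal.ofReal ((p / (p - L)) ^ p) * ∑' n : ℕ, ENNReal.ofReal (x (n + 1) ^ p) :=
  stmt_11_general p L hp hLp l hl Λ hΛ hcond x hx
end

section
/- Let p>1 and let (λ_n)_{n≥1} be a positive real sequence with Λ_n = Σ_{k=1}^n λ_k. Suppose L = sup_{n≥1} ( Λ_{n+1}/λ_{n+1} − Λ_n/λ_n ) satisfies L < p. Then for every positive real sequence (x_n)_{n≥1} for which all the series below converge, setting A_n = (1/Λ_n) Σ_{k=1}^n λ_k x_k, one has Σ_{n=1}^∞ A_n^p ≤ ( p/(p−L) ) Σ_{n=1}^∞ x_n A_n^{p−1}. -/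
/-!
Write `a n` for the weighted mean, `Λ n` for the partial sums of the weights `l` and
`w n = Λ n / l (n + 1)`. The recursion `(w n + 1) a (n + 1) = w n a n + x (n + 1)` together with
Young's inequality `p a b ^ (p - 1) ≤ a ^ p + (p - 1) b ^ p` gives
`(w n + p) a (n + 1) ^ p - w n a n ^ p ≤ p x (n + 1) a (n + 1) ^ (p - 1)`. Summing, the terms
`w n a n ^ p` telescope up to the increments `w (n + 1) - w n`, which are at most `L`; this
leaves `(p - L) ∑ a n ^ p ≤ p ∑ x n a n ^ (p - 1)` for every partial sum.
-/

open Finset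

noncomputable def weightedMean (l x : ℕ → ℝ) (n : ℕ) : ℝ :=
  (∑ k ∈ Icc 1 n, l k * x k) / ∑ k ∈ Icc 1 n, l k

lemma mul_mul_rpow_sub_one_le {p a b : ℝ} (hp : 1 < p) (ha : 0 ≤ a) (hb : 0 ≤ b) :
    p * (a * b ^ (p - 1)) ≤ a ^ p + (p - 1) * b ^ p := by
  have hq := Real.HolderConjugate.conjExponent hp
  have hpos : 0 < p := by linarith
  have hpow : (b ^ (p - 1)) ^ Real.conjExponent p = b ^ p := by
    rw [← Real.rpow_mul hb, Real.conjExponent, mul_div_cancel₀ _ (by linarith)]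
  have hyoung := Real.young_inequality_of_nonneg ha (Real.rpow_nonneg hb (p - 1)) hq
  rw [hpow, Real.conjExponent, div_div_eq_mul_div] at hyoung
  calc p * (a * b ^ (p - 1)) ≤ p * (a ^ p / p + b ^ p * (p - 1) / p) := by gcongr
    _ = a ^ p + (p - 1) * b ^ p := by field_simp

lemma add_mul_rpow_sub_mul_rpow_le {p w a b y : ℝ} (hp : 1 < p) (hw : 0 ≤ w) (ha : 0 ≤ a)
    (hb : 0 ≤ b) (hupdate : (w + 1) * b = w * a + y) :
    (w + p) * b ^ p - w * a ^ p ≤ p * (y * b ^ (p - 1)) := by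
  have hpow : b ^ p = b * b ^ (p - 1) := by
    conv_lhs => rw [show p = 1 + (p - 1) by ring]
    rw [Real.rpow_add' hb (by linarith), Real.rpow_one]
  have htangent := mul_le_mul_of_nonneg_left (mul_mul_rpow_sub_one_le hp ha hb) hw
  rw [show y = (w + 1) * b - w * a by linarith]
  calc (w + p) * b ^ p - w * a ^ p
      ≤ (w + p) * b ^ p - w * (p * (a * b ^ (p - 1)) - (p - 1) * b ^ p) := by linarith
    _ = p * (((w + 1) * b - w * a) * b ^ (p - 1)) := by rw [hpow]; ring

section WeightedMean

variable {l x : ℕ → ℝ}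

lemma weightedMean_nonneg (hl : ∀ k, 1 ≤ k → 0 ≤ l k) (hx : ∀ k, 1 ≤ k → 0 ≤ x k) (n : ℕ) :
    0 ≤ weightedMean l x n :=
  div_nonneg
    (sum_nonneg fun k hk => mul_nonneg (hl k (mem_Icc.mp hk).1) (hx k (mem_Icc.mp hk).1))
    (sum_nonneg fun k hk => hl k (mem_Icc.mp hk).1)

lemma sum_Icc_mul_weightedMean (hl : ∀ k, 1 ≤ k → 0 < l k) (n : ℕ) :
    (∑ k ∈ Icc 1 n, l k) * weightedMean l x n = ∑ k ∈ Icc 1 n, l k * x k := by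
  rcases Nat.eq_zero_or_pos n with rfl | hn
  · simp
  · exact mul_div_cancel₀ _
      (sum_pos (fun k hk => hl k (mem_Icc.mp hk).1) ⟨1, mem_Icc.mpr ⟨le_rfl, hn⟩⟩).ne'

lemma weightedMean_succ (hl : ∀ k, 1 ≤ k → 0 < l k) (n : ℕ) :
    ((∑ k ∈ Icc 1 n, l k) / l (n + 1) + 1) * weightedMean l x (n + 1)
      = (∑ k ∈ Icc 1 n, l k) / l (n + 1) * weightedMean l x n + x (n + 1) := by
  have hln : l (n + 1) ≠ 0 := (hl (n + 1) n.succ_pos).ne'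
  have hsucc := sum_Icc_mul_weightedMean (x := x) hl (n + 1)
  rw [sum_Icc_succ_top n.succ_pos, sum_Icc_succ_top n.succ_pos,
    ← sum_Icc_mul_weightedMean (x := x) hl n] at hsucc
  field_simp
  linarith

lemma sum_Icc_succ_div (hl : ∀ k, 1 ≤ k → 0 < l k) (n : ℕ) :
    (∑ k ∈ Icc 1 (n + 1), l k) / l (n + 1) = (∑ k ∈ Icc 1 n, l k) / l (n + 1) + 1 := by
  rw [sum_Icc_succ_top n.succ_pos, add_div, div_self (hl (n + 1) n.succ_pos).ne']

lemma sum_Icc_div_nonneg (hl : ∀ k, 1 ≤ k → 0 < l k) (n : ℕ) :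
    0 ≤ (∑ k ∈ Icc 1 n, l k) / l (n + 1) :=
  div_nonneg (sum_nonneg fun k hk => (hl k (mem_Icc.mp hk).1).le) (hl (n + 1) n.succ_pos).le

variable {p L : ℝ}

lemma sub_mul_sum_rpow_weightedMean_add_le (hp : 1 < p) (hl : ∀ k, 1 ≤ k → 0 < l k)
    (hx : ∀ k, 1 ≤ k → 0 ≤ x k)
    (hL : ∀ n, (∑ k ∈ Icc 1 (n + 2), l k) / l (n + 2)
      - (∑ k ∈ Icc 1 (n + 1), l k) / l (n + 1) ≤ L) (N : ℕ) :
    (p - L) * ∑ n ∈ range N, weightedMean l x (n + 1) ^ p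
        + (∑ k ∈ Icc 1 N, l k) / l (N + 1) * weightedMean l x N ^ p
      ≤ p * ∑ n ∈ range N, x (n + 1) * weightedMean l x (n + 1) ^ (p - 1) := by
  induction N with
  | zero => simp
  | succ N ih =>
    have hmean := weightedMean_nonneg (fun k hk => (hl k hk).le) hx
    have hstep := add_mul_rpow_sub_mul_rpow_le hp (sum_Icc_div_nonneg hl N) (hmean N)
      (hmean (N + 1)) (weightedMean_succ hl N)
    have hincr := hL N
    rw [sum_Icc_succ_div hl (N + 1), sum_Icc_succ_div hl N] at hincr
    have hincr' : ((∑ k ∈ Icc 1 (N + 1), l k) / l (N + 2) - (∑ k ∈ Icc 1 N, l k) / l (N + 1))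
        * weightedMean l x (N + 1) ^ p ≤ L * weightedMean l x (N + 1) ^ p :=
      mul_le_mul_of_nonneg_right (by linarith) (Real.rpow_nonneg (hmean (N + 1)) p)
    rw [sum_range_succ, sum_range_succ]
    linarith

theorem tsum_rpow_weightedMean_le (hp : 1 < p) (hl : ∀ k, 1 ≤ k → 0 < l k)
    (hx : ∀ k, 1 ≤ k → 0 ≤ x k)
    (hL : ∀ n, (∑ k ∈ Icc 1 (n + 2), l k) / l (n + 2)
      - (∑ k ∈ Icc 1 (n + 1), l k) / l (n + 1) ≤ L)
    (hLp : L < p) (hs : Summable fun n => x (n + 1) * weightedMean l x (n + 1) ^ (p - 1)) :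
    ∑' n, weightedMean l x (n + 1) ^ p
      ≤ p / (p - L) * ∑' n, x (n + 1) * weightedMean l x (n + 1) ^ (p - 1) := by
  have hmean := weightedMean_nonneg (fun k hk => (hl k hk).le) hx
  have hterm : ∀ n, 0 ≤ x (n + 1) * weightedMean l x (n + 1) ^ (p - 1) := fun n =>
    mul_nonneg (hx (n + 1) n.succ_pos) (Real.rpow_nonneg (hmean _) _)
  refine Real.tsum_le_of_sum_range_le (fun n => Real.rpow_nonneg (hmean _) _) fun N => ?_
  have hpartial := sub_mul_sum_rpow_weightedMean_add_le hp hl hx hL N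
  have hboundary : 0 ≤ (∑ k ∈ Icc 1 N, l k) / l (N + 1) * weightedMean l x N ^ p :=
    mul_nonneg (sum_Icc_div_nonneg hl N) (Real.rpow_nonneg (hmean N) p)
  calc ∑ n ∈ range N, weightedMean l x (n + 1) ^ p
      ≤ p / (p - L) * ∑ n ∈ range N, x (n + 1) * weightedMean l x (n + 1) ^ (p - 1) := by
        rw [div_mul_eq_mul_div, le_div_iff₀ (by linarith), mul_comm]
        linarith
    _ ≤ p / (p - L) * ∑' n, x (n + 1) * weightedMean l x (n + 1) ^ (p - 1) := by
        gcongr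
        exact hs.sum_le_tsum _ fun n _ => hterm n

end WeightedMean

theorem stmt_14_general (p : ℝ) (hp : 1 < p)
    (l x : ℕ → ℝ) (hl : ∀ n, 1 ≤ n → 0 < l n) (hx : ∀ n, 1 ≤ n → 0 < x n)
    (Λ : ℕ → ℝ) (hΛ : ∀ n, Λ n = ∑ k ∈ Finset.Icc 1 n, l k)
    (L : ℝ)
    (hL : IsLUB (Set.range fun n : ℕ => Λ (n + 2) / l (n + 2) - Λ (n + 1) / l (n + 1)) L)
    (hLp : L < p)
    (A : ℕ → ℝ) (hA : ∀ n, 1 ≤ n → A n = (1 / Λ n) * ∑ k ∈ Finset.Icc 1 n, l k * x k)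
    (hs2 : Summable fun n : ℕ => x (n + 1) * A (n + 1) ^ (p - 1)) :
    ∑' n : ℕ, A (n + 1) ^ p
      ≤ (p / (p - L)) * ∑' n : ℕ, x (n + 1) * A (n + 1) ^ (p - 1) := by
  obtain rfl : Λ = fun n => ∑ k ∈ Icc 1 n, l k := funext hΛ
  have hmean : ∀ n, A (n + 1) = weightedMean l x (n + 1) := fun n => by
    rw [hA _ n.succ_pos, one_div_mul_eq_div, weightedMean]
  simp only [hmean] at hs2 ⊢
  exact tsum_rpow_weightedMean_le hp hl (fun k hk => (hx k hk).le) (fun n => hL.1 ⟨n, rfl⟩)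
    hLp hs2

/-- strengthened form of Cartlidge's theorem, inequality (1.40). -/
theorem stmt_14 (p : ℝ) (hp : 1 < p)
    (l x : ℕ → ℝ) (hl : ∀ n, 1 ≤ n → 0 < l n) (hx : ∀ n, 1 ≤ n → 0 < x n)
    (Λ : ℕ → ℝ) (hΛ : ∀ n, Λ n = ∑ k ∈ Finset.Icc 1 n, l k)
    (L : ℝ)
    (hL : IsLUB (Set.range fun n : ℕ => Λ (n + 2) / l (n + 2) - Λ (n + 1) / l (n + 1)) L)
    (hLp : L < p)
    (A : ℕ → ℝ) (hA : ∀ n, 1 ≤ n → A n = (1 / Λ n) * ∑ k ∈ Finset.Icc 1 n, l k * x k)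
    (hs1 : Summable fun n : ℕ => A (n + 1) ^ p)
    (hs2 : Summable fun n : ℕ => x (n + 1) * A (n + 1) ^ (p - 1)) :
    ∑' n : ℕ, A (n + 1) ^ p
      ≤ (p / (p - L)) * ∑' n : ℕ, x (n + 1) * A (n + 1) ^ (p - 1) :=
  stmt_14_general p hp l x hl hx Λ hΛ L hL hLp A hA hs2
end
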